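/- arXiv:2404.07280 — 5 statements merged into one kernel-verified Lean document; each statement's English description precedes it below -/
import Mathlib

section
/- For all integers a, b ≥ 0, Σ_{i=0}^{a} Σ_{j=0}^{b} h_{a−i} h_{b−j} p_{i+j} = (b+1) h_a h_b + Σ_{i=1}^{a} (b − a + 2i) h_{a−i} h_{b+i}, where by convention p_0 = 1. -/
/-!
The input is Newton's identity for complete homogeneous symmetric polynomials,
`n h_n = ∑_{m=1}^n p_m h_{n-m}`: the monomials of `x^m h_{n-m}` are the monomials of degree `n`
in which `x` occurs at least `m` times, so summing over `m` and over the variables `x` counts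
every monomial of degree `n` exactly `n` times. With `p_0 = 1` it reads
`∑_{k ≤ n} h_{n-k} p_k = (n+1) h_n`, and the theorem follows from this convolution identity alone.
Completing the inner sum over `j` to the full convolution of degree `i + b` gives
`(b+i+1) h_{a-i} h_{b+i}` minus the terms `h_{a-i} h_{i+b-w} p_w` with `w < i`; grouped along
`s = i - w` these are again convolutions, of degree `a - s`, and add up to
`(a+1-s) h_{a-s} h_{b+s}`. What remains is the coefficient `(b+i+1) - (a+1-i) = b - a + 2i`.
-/

open MvPolynomial Finset

/-- the power sum `p_k`, with the convention `p_0 = 1`. -/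
noncomputable def pp (N k : ℕ) : MvPolynomial (Fin N) ℚ :=
  if k = 0 then 1 else psum (Fin N) ℚ k

namespace MvPolynomial

variable {σ R : Type*} [Fintype σ] [DecidableEq σ] [CommSemiring R]

theorem X_pow_mul_hsymm_sub (x : σ) {m n : ℕ} (hmn : m ≤ n) :
    X x ^ m * hsymm σ R (n - m) =
      ∑ s ∈ univ.filter fun s : Sym σ n => m ≤ (s : Multiset σ).count x,
        ((s : Multiset σ).map X).prod := by
  rw [hsymm, mul_sum]
  refine sum_nbij (fun t => Sym.mk (Multiset.replicate m x + t) (by simp [hmn])) ?_ ?_ ?_ ?_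
  · intro t _
    simp [mem_filter]
  · intro t _ t' _ h
    exact Sym.coe_injective (add_left_cancel (congrArg Sym.toMultiset h))
  · intro s hs
    have hle : Multiset.replicate m x ≤ s :=
      Multiset.le_count_iff_replicate_le.mp (mem_filter.mp hs).2
    refine ⟨Sym.mk (s - Multiset.replicate m x) (by simp [Multiset.card_sub hle]),
      mem_univ _, ?_⟩
    exact Sym.coe_injective (add_tsub_cancel_of_le hle)
  · intro t _
    simp [Sym.val_eq_coe]

theorem nsmul_hsymm_eq_sum_psum_mul_hsymm (n : ℕ) :
    n • hsymm σ R n = ∑ m ∈ Icc 1 n, psum σ R m * hsymm σ R (n - m) := by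
  calc n • hsymm σ R n
      = ∑ s : Sym σ n, ∑ x, (s : Multiset σ).count x • ((s : Multiset σ).map X).prod := by
        rw [hsymm, smul_sum]
        refine sum_congr rfl fun s _ => ?_
        rw [← sum_smul, Multiset.sum_count_eq_card (fun _ _ => mem_univ _), Sym.card_coe]
        rfl
    _ = ∑ s : Sym σ n, ∑ x, ∑ m ∈ Icc 1 n with m ≤ (s : Multiset σ).count x,
          ((s : Multiset σ).map X).prod := by
        refine sum_congr rfl fun s _ => sum_congr rfl fun x _ => ?_
        have hcount : (s : Multiset σ).count x ≤ n :=
          (Multiset.count_le_card x _).trans s.card_coe.le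
        have hfilter : {m ∈ Icc 1 n | m ≤ (s : Multiset σ).count x}
            = Icc 1 ((s : Multiset σ).count x) := by
          ext m
          simp only [mem_filter, mem_Icc]
          omega
        rw [sum_const, hfilter, Nat.card_Icc, Nat.add_sub_cancel]
    _ = ∑ m ∈ Icc 1 n, ∑ x,
          ∑ s ∈ univ.filter fun s : Sym σ n => m ≤ (s : Multiset σ).count x,
            ((s : Multiset σ).map X).prod := by
        simp only [sum_filter]
        rw [sum_comm]
        exact (sum_congr rfl fun _ _ => sum_comm).trans sum_comm
    _ = ∑ m ∈ Icc 1 n, psum σ R m * hsymm σ R (n - m) := by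
        refine sum_congr rfl fun m hm => ?_
        rw [psum, sum_mul]
        exact sum_congr rfl fun x _ => (X_pow_mul_hsymm_sub x (mem_Icc.mp hm).2).symm

end MvPolynomial

theorem sum_range_sum_range_eq_sum_Icc_sum_range {M : Type*} [AddCommMonoid M] (a : ℕ)
    (f : ℕ → ℕ → M) :
    ∑ i ∈ range (a + 1), ∑ w ∈ range i, f i w
      = ∑ s ∈ Icc 1 a, ∑ k ∈ range (a + 1 - s), f (s + k) k := by
  rw [sum_sigma', sum_sigma']
  refine sum_nbij' (fun p => ⟨p.1 - p.2, p.2⟩) (fun q => ⟨q.1 + q.2, q.2⟩) ?_ ?_ ?_ ?_ ?_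
  · rintro ⟨i, w⟩ h
    simp only [mem_sigma, mem_range, mem_Icc] at h ⊢
    omega
  · rintro ⟨s, k⟩ h
    simp only [mem_sigma, mem_range, mem_Icc] at h ⊢
    omega
  · rintro ⟨i, w⟩ h
    simp only [mem_sigma, mem_range] at h
    simp only [Sigma.mk.injEq, heq_eq_eq, and_true]
    omega
  · rintro ⟨s, k⟩ _
    simp
  · rintro ⟨i, w⟩ h
    simp only [mem_sigma, mem_range] at h
    simp only
    rw [Nat.sub_add_cancel h.2.le]

section Convolution

variable {R : Type*} [CommRing R] {h p : ℕ → R}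

theorem sum_range_mul_add_eq_of_sum_range_mul
    (hp : ∀ n, ∑ k ∈ range (n + 1), h (n - k) * p k = (n + 1) • h n) (b i : ℕ) :
    ∑ j ∈ range (b + 1), h (b - j) * p (i + j)
      = (i + b + 1) • h (i + b) - ∑ w ∈ range i, h (i + b - w) * p w := by
  rw [eq_sub_iff_add_eq, ← hp (i + b), show i + b + 1 = i + (b + 1) by omega,
    sum_range_add _ i (b + 1), add_comm]
  congr 1
  refine sum_congr rfl fun j _ => ?_
  rw [Nat.add_sub_add_left]

theorem sum_range_mul_sum_range_eq_of_sum_range_mul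
    (hp : ∀ n, ∑ k ∈ range (n + 1), h (n - k) * p k = (n + 1) • h n) (a b : ℕ) :
    ∑ i ∈ range (a + 1), h (a - i) * ∑ w ∈ range i, h (i + b - w) * p w
      = ∑ s ∈ Icc 1 a, (a + 1 - s) • (h (a - s) * h (b + s)) := by
  simp_rw [mul_sum]
  rw [sum_range_sum_range_eq_sum_Icc_sum_range]
  refine sum_congr rfl fun s hs => ?_
  have hsa : s ≤ a := (mem_Icc.mp hs).2
  rw [show a + 1 - s = a - s + 1 by omega, ← smul_mul_assoc, ← hp, sum_mul]
  refine sum_congr rfl fun k _ => ?_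
  rw [show s + k + b - k = b + s by omega, Nat.sub_add_eq]
  ring

theorem sum_sum_mul_mul_eq_of_sum_range_mul
    (hp : ∀ n, ∑ k ∈ range (n + 1), h (n - k) * p k = (n + 1) • h n) (a b : ℕ) :
    ∑ i ∈ range (a + 1), ∑ j ∈ range (b + 1), h (a - i) * h (b - j) * p (i + j)
      = (b + 1) • (h a * h b) +
        ∑ i ∈ Icc 1 a, ((b : ℤ) - (a : ℤ) + 2 * (i : ℤ)) • (h (a - i) * h (b + i)) := by
  calc ∑ i ∈ range (a + 1), ∑ j ∈ range (b + 1), h (a - i) * h (b - j) * p (i + j)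
      = ∑ i ∈ range (a + 1), h (a - i) * ∑ j ∈ range (b + 1), h (b - j) * p (i + j) := by
        simp_rw [mul_sum, mul_assoc]
    _ = ∑ i ∈ range (a + 1), (i + b + 1) • (h (a - i) * h (i + b))
          - ∑ i ∈ range (a + 1), h (a - i) * ∑ w ∈ range i, h (i + b - w) * p w := by
        simp_rw [sum_range_mul_add_eq_of_sum_range_mul hp, mul_sub, mul_smul_comm]
        rw [sum_sub_distrib]
    _ = (b + 1) • (h a * h b) + ∑ i ∈ Icc 1 a, (i + b + 1) • (h (a - i) * h (b + i))
          - ∑ i ∈ Icc 1 a, (a + 1 - i) • (h (a - i) * h (b + i)) := by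
        rw [sum_range_mul_sum_range_eq_of_sum_range_mul hp, range_eq_Ico,
          sum_eq_sum_Ico_succ_bot a.succ_pos, Nat.succ_eq_add_one, Ico_add_one_right_eq_Icc]
        simp only [zero_add, Nat.sub_zero, add_zero, add_comm _ b]
    _ = (b + 1) • (h a * h b) + ∑ i ∈ Icc 1 a,
          ((b : ℤ) - (a : ℤ) + 2 * (i : ℤ)) • (h (a - i) * h (b + i)) := by
        rw [add_sub_assoc, ← sum_sub_distrib]
        congr 1
        refine sum_congr rfl fun i hi => ?_
        have hia : i ≤ a := (mem_Icc.mp hi).2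
        rw [← natCast_zsmul, ← natCast_zsmul, ← sub_smul]
        congr 1
        omega

end Convolution

theorem sum_range_hsymm_mul_pp (N n : ℕ) :
    ∑ k ∈ range (n + 1), hsymm (Fin N) ℚ (n - k) * pp N k
      = (n + 1) • hsymm (Fin N) ℚ n := by
  rw [range_eq_Ico, sum_eq_sum_Ico_succ_bot n.succ_pos, Nat.succ_eq_add_one,
    Ico_add_one_right_eq_Icc, succ_nsmul', nsmul_hsymm_eq_sum_psum_mul_hsymm]
  congr 1
  · simp [pp]
  · refine sum_congr rfl fun k hk => ?_
    rw [pp, if_neg (Nat.one_le_iff_ne_zero.mp (mem_Icc.mp hk).1), mul_comm]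

/-- For all `a, b ≥ 0`,
`Σ_{i=0}^{a} Σ_{j=0}^{b} h_{a−i} h_{b−j} p_{i+j}
  = (b+1) h_a h_b + Σ_{i=1}^{a} (b − a + 2i) h_{a−i} h_{b+i}` (with `p_0 = 1`). -/
theorem stmt2 (a b : ℕ) (N : ℕ) :
    ∑ i ∈ range (a + 1), ∑ j ∈ range (b + 1),
        hsymm (Fin N) ℚ (a - i) * hsymm (Fin N) ℚ (b - j) * pp N (i + j)
      = (b + 1) • (hsymm (Fin N) ℚ a * hsymm (Fin N) ℚ b) +
        ∑ i ∈ Finset.Icc 1 a,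
          ((b : ℤ) - (a : ℤ) + 2 * (i : ℤ)) •
            (hsymm (Fin N) ℚ (a - i) * hsymm (Fin N) ℚ (b + i)) :=
  sum_sum_mul_mul_eq_of_sum_range_mul (sum_range_hsymm_mul_pp N) a b
end

section
/- Fix integers n ≥ 2 and 2 ≤ i ≤ n. The number of permutations σ of {1,…,n} such that 1 and n lie in the same cycle of σ and that cycle has length exactly i equals (i−1) · (n−2)!. -/
/-!
Write `x`, `z` for the two marked points and `N` for the number of points. A permutation `σ`
qualifies exactly when its cycle list `σ.toList x = [x, σ x, σ² x, …]` has length `i` and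
contains `z`. Such lists are the `List.ofFn e` for embeddings `e : Fin i ↪ α` with `e 0 = x` and
`z` in the range of `e`; counting all embeddings with `e 0 = x` and removing those that avoid `z`
leaves `(i - 1) · (N - 2)! / (N - i)!` of them. A permutation whose cycle through `x` is
prescribed is free on the remaining `N - i` points, which contributes the factor `(N - i)!`.
-/

open Equiv Finset
open scoped Nat

section Embedding

variable {β : Type*} [Fintype β] [DecidableEq β]

theorem card_filter_embedding_apply_zero_eq (p : β → Prop) [DecidablePred p] {a : β} (ha : p a)
    (k : ℕ) :
    #{e : Fin (k + 1) ↪ β | e 0 = a ∧ ∀ j, p (e j)} = (#{b | p b} - 1).descFactorial k := by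
  have e : {e : Fin (k + 1) ↪ β // e 0 = a ∧ ∀ j, p (e j)} ≃ (Fin k ↪ {b // p b ∧ b ≠ a}) :=
    { toFun := fun e => ⟨fun j => ⟨e.1 j.succ, e.2.2 _,
          fun h => j.succ_ne_zero (e.1.injective (h.trans e.2.1.symm))⟩,
        fun i j h => Fin.succ_injective _ (e.1.injective (congrArg Subtype.val h))⟩
      invFun := fun f => ⟨⟨Fin.cons a fun j => (f j).1, Fin.cons_injective_iff.2
          ⟨fun ⟨j, hj⟩ => (f j).2.2 hj, fun i j h => f.injective (Subtype.ext h)⟩⟩,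
        rfl, Fin.cases ha fun j => (f j).2.1⟩
      left_inv := fun e => by
        ext j
        cases j using Fin.cases
        exacts [e.2.1.symm, rfl]
      right_inv := fun f => by ext; simp }
  have hcard : #{b | p b ∧ b ≠ a} = #{b | p b} - 1 := by
    rw [← card_erase_of_mem (by simpa using ha)]
    congr 1
    ext b
    simp [and_comm]
  rw [← Fintype.card_subtype, Fintype.card_congr e, Fintype.card_embedding_eq, Fintype.card_fin,
    Fintype.card_subtype, hcard]

theorem card_filter_embedding_apply_zero_exists_apply_eq {a b : β} (hab : a ≠ b) (k : ℕ) :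
    #{e : Fin (k + 2) ↪ β | e 0 = a ∧ ∃ j, e j = b} =
      (k + 1) * (Fintype.card β - 2).descFactorial k := by
  obtain ⟨m, hm⟩ : ∃ m, Fintype.card β = m + 2 :=
    ⟨_, (Nat.sub_add_cancel (Fintype.one_lt_card_iff.2 ⟨a, b, hab⟩)).symm⟩
  have hall : #{e : Fin (k + 2) ↪ β | e 0 = a} = (m + 1) * m.descFactorial k := by
    have := card_filter_embedding_apply_zero_eq (fun _ : β => True) (a := a) trivial (k + 1)
    simp only [forall_const, and_true, filter_true, card_univ, hm] at this
    exact this.trans (Nat.succ_descFactorial_succ m k)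
  have havoid :
      #{e : Fin (k + 2) ↪ β | e 0 = a ∧ ∀ j, e j ≠ b} = (m - k) * m.descFactorial k := by
    have := card_filter_embedding_apply_zero_eq (· ≠ b) hab (k + 1)
    rw [filter_ne', card_erase_of_mem (mem_univ b), card_univ, hm] at this
    exact this.trans (Nat.descFactorial_succ m k)
  rw [← card_filter_add_card_filter_not (fun e : Fin (k + 2) ↪ β => ∃ j, e j = b),
    filter_filter, filter_filter] at hall
  simp only [not_exists, ← ne_eq, havoid] at hall
  rw [hm, Nat.add_sub_cancel]
  rcases le_or_gt k m with hkm | hkm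
  · rw [show m + 1 = k + 1 + (m - k) by omega, add_mul] at hall
    exact Nat.add_right_cancel hall
  · simpa [Nat.descFactorial_eq_zero_iff_lt.2 hkm] using hall

end Embedding

namespace Equiv.Perm

variable {α : Type*} [Fintype α] [DecidableEq α]

theorem toList_cycleOf (σ : Perm α) (x : α) : (σ.cycleOf x).toList x = σ.toList x := by
  by_cases hx : σ x = x
  · simp [(cycleOf_eq_one_iff σ).2 hx, toList_eq_nil_iff.2 (notMem_support.2 hx)]
  · refine List.ext_getElem ?_ fun n _ _ => ?_
    · rw [length_toList, length_toList,
        (isCycle_cycleOf σ hx).cycleOf_eq (by rwa [cycleOf_apply_self])]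
    · simp only [getElem_toList, cycleOf_pow_apply_self]

theorem toList_eq_ofFn {σ : Perm α} {x : α} {n : ℕ} (h : (σ.toList x).length = n) :
    σ.toList x = List.ofFn fun j : Fin n => (σ ^ (j : ℕ)) x :=
  List.ext_getElem (by simpa using h) fun j _ _ => by simp [getElem_toList]

theorem natCard_sameCycle_eq_length_toList {σ : Perm α} {x : α} (hx : x ∈ σ.support) :
    Nat.card {y // σ.SameCycle x y} = (σ.toList x).length := by
  rw [length_toList, ← Nat.card_eq_finsetCard]
  exact Nat.card_congr (Equiv.subtypeEquivRight fun y => by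
    rw [mem_support_cycleOf_iff, and_iff_left hx])

theorem sameCycle_and_natCard_eq_iff {σ : Perm α} {x z : α} (hxz : x ≠ z) {n : ℕ} :
    σ.SameCycle x z ∧ Nat.card {y // σ.SameCycle x y} = n ↔
      (σ.toList x).length = n ∧ z ∈ σ.toList x := by
  constructor
  · rintro ⟨hz, hcard⟩
    have hx : x ∈ σ.support := mem_support.2 fun hfix => hxz (hz.eq_of_left hfix)
    exact ⟨natCard_sameCycle_eq_length_toList hx ▸ hcard, mem_toList_iff.2 ⟨hz, hx⟩⟩
  · rintro ⟨hlen, hz⟩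
    obtain ⟨hz, hx⟩ := mem_toList_iff.1 hz
    exact ⟨hz, (natCard_sameCycle_eq_length_toList hx).trans hlen⟩

theorem toList_eq_iff_forall_mem_apply_eq {σ : Perm α} {x : α} {l : List α} (hl : l.Nodup)
    (hlen : 2 ≤ l.length) (hx : l[0]? = some x) :
    σ.toList x = l ↔ ∀ y ∈ l, σ y = l.formPerm y := by
  constructor
  · rintro rfl y hy
    rw [formPerm_toList, (mem_toList_iff.1 hy).1.cycleOf_apply]
  · intro h
    have hx' : l.get ⟨0, by omega⟩ = x := by
      simpa [List.getElem?_eq_getElem (by omega : 0 < l.length)] using hx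
    have hsupp : l.formPerm.support = l.toFinset :=
      List.support_formPerm_of_nodup _ hl (by rintro _ rfl; simp at hlen)
    have hxs : x ∈ l.formPerm.support := by
      rw [hsupp, List.mem_toFinset, ← hx']
      exact List.get_mem _ _
    -- `l.formPerm` agrees with `σ` on its support, so it is the cycle of `σ` through `x`.
    have hmem : l.formPerm ∈ σ.cycleFactorsFinset :=
      mem_cycleFactorsFinset_iff.2 ⟨List.isCycle_formPerm hl hlen,
        fun y hy => (h y (by simpa [hsupp] using hy)).symm⟩
    rw [← toList_cycleOf, ← cycle_is_cycleOf hxs hmem, ← hx', toList_formPerm_nontrivial l hlen hl]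

theorem card_filter_forall_mem_apply_eq (c : Perm α) (s : Finset α) :
    #{σ : Perm α | ∀ y ∈ s, σ y = c y} = (Fintype.card α - #s)! := by
  have e : {σ : Perm α // ∀ y ∈ s, σ y = c y} ≃ Perm {y // y ∉ s} :=
    calc {σ : Perm α // ∀ y ∈ s, σ y = c y}
        ≃ {τ : Perm α // ∀ y, ¬y ∉ s → τ y = y} :=
          (Equiv.mulLeft c⁻¹).subtypeEquiv fun σ => by simp [eq_symm_apply, eq_comm]
      _ ≃ Perm {y // y ∉ s} := (Perm.subtypeEquivSubtypePerm _).symm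
  rw [← Fintype.card_subtype, Fintype.card_congr e, Fintype.card_perm, Fintype.card_subtype_compl,
    Fintype.card_coe]

theorem card_filter_toList_eq {x : α} {l : List α} (hl : l.Nodup) (hlen : 2 ≤ l.length)
    (hx : l[0]? = some x) : #{σ : Perm α | σ.toList x = l} = (Fintype.card α - l.length)! := by
  simp_rw [toList_eq_iff_forall_mem_apply_eq hl hlen hx, ← List.mem_toFinset,
    card_filter_forall_mem_apply_eq, List.toFinset_card_of_nodup hl]

theorem card_filter_sameCycle_and_natCard_eq {x z : α} (hxz : x ≠ z) {k : ℕ}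
    (hk : k + 2 ≤ Fintype.card α) :
    #{σ : Perm α | σ.SameCycle x z ∧ Nat.card {y // σ.SameCycle x y} = k + 2} =
      (k + 1) * (Fintype.card α - 2)! := by
  have hunion : ({σ : Perm α | σ.SameCycle x z ∧ Nat.card {y // σ.SameCycle x y} = k + 2} :
      Finset (Perm α)) = ({e : Fin (k + 2) ↪ α | e 0 = x ∧ ∃ j, e j = z} : Finset _).biUnion
        fun e => {σ | σ.toList x = List.ofFn e} := by
    ext σ
    simp only [sameCycle_and_natCard_eq_iff hxz, mem_filter, mem_univ, true_and, mem_biUnion]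
    constructor
    · rintro ⟨hlen, hz⟩
      rw [toList_eq_ofFn hlen] at hz ⊢
      exact ⟨⟨_, List.nodup_ofFn.1 (toList_eq_ofFn hlen ▸ nodup_toList σ x)⟩,
        ⟨by simp, List.mem_ofFn.1 hz⟩, rfl⟩
    · rintro ⟨e, ⟨-, hz⟩, h⟩
      rw [h]
      exact ⟨List.length_ofFn, List.mem_ofFn.2 hz⟩
  rw [hunion, card_biUnion]
  · rw [sum_congr rfl fun e he => card_filter_toList_eq (List.nodup_ofFn.2 e.injective)
      (by simp) (by simpa using (mem_filter.1 he).2.1)]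
    simp only [List.length_ofFn, sum_const, smul_eq_mul]
    rw [card_filter_embedding_apply_zero_exists_apply_eq hxz, mul_assoc,
      show Fintype.card α - (k + 2) = Fintype.card α - 2 - k by omega, mul_comm _ (_ - k)!,
      Nat.factorial_mul_descFactorial (by omega)]
  · intro e _ e' _ hne
    exact disjoint_filter.2 fun σ _ h h' =>
      hne (DFunLike.coe_injective (List.ofFn_injective (h.symm.trans h')))

end Equiv.Perm

/-- For `n ≥ 2` and `2 ≤ i ≤ n`, the number of permutations `σ` of `{1,…,n}`
(modelled on `Fin n`, where the elements `1` and `n` correspond to `⟨0⟩` and `⟨n-1⟩`)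
such that `1` and `n` lie in the same cycle of `σ` and that cycle has length exactly `i`
equals `(i−1)·(n−2)!`.  The length of the cycle of `σ` containing `x` is the cardinality
of the orbit of `x` under iteration of `σ`, i.e. `Nat.card {y // σ.SameCycle x y}`. -/
theorem stmt5 (n i : ℕ) (hi : 2 ≤ i) (hin : i ≤ n) :
    Nat.card {σ : Equiv.Perm (Fin n) //
        σ.SameCycle ⟨0, by omega⟩ ⟨n - 1, by omega⟩ ∧
        Nat.card {y : Fin n // σ.SameCycle ⟨0, by omega⟩ y} = i} =
      (i - 1) * (n - 2).factorial := by
  obtain ⟨k, rfl⟩ : ∃ k, i = k + 2 := ⟨i - 2, by omega⟩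
  rw [Nat.card_eq_fintype_card, Fintype.card_subtype,
    Perm.card_filter_sameCycle_and_natCard_eq (by simp [Fin.ext_iff]; omega)
      (by simpa using hin)]
  simp
end

section
/- Let n ≥ 1 and k ≥ 0 be integers. Then in the ring of symmetric functions with an adjoined sequence of commuting formal variables s_0, s_1, s_2, …, the identity Σ_{j=0}^{k} [ Σ_{i=2}^{n} (i−1) h_{k−j} h_{n−i} s_{i+j−1} + Σ_{i=1}^{n−1} Σ_{ℓ=1}^{n−i} h_{k−j} h_{n−ℓ−i} p_{ℓ+j} s_{i−1} ] = Σ_{i=2}^{n} [ (i−1) h_{n−i} Σ_{j=0}^{k+i−1} h_{k+i−1−j} s_j + (k+i−n) h_{k+i−1} Σ_{j=0}^{n−i} h_{n−i−j} s_j ] holds. -/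
/-!
Write the identity as (A) + (B) = (C) + (D), with (A), (B) the two sums on the left and (C), (D)
the two on the right. It holds for any sequences `h`, `p` in a commutative ring satisfying
Newton's identity `m h_m = ∑_{u<m} p_{m-u} h_u`, as complete homogeneous and power-sum symmetric
functions do. The terms of (C) with `j ≥ i - 1` reproduce (A). In (B), Newton's identity
evaluates `∑_{j ≤ k} h_{k-j} p_{t+j}` as `(k+t) h_{k+t}` minus a tail, and once more the tails,
summed against `h_{a-t}`, as `∑_t (a-t) h_{k+t} h_{a-t}`; so with `a = n - i`, (B) becomes
`∑_i ∑_t (k+2t-a) h_{k+t} h_{a-t} s_{i-1}`. Reindexed, (B), the rest of (C) and (D) are all sums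
of `h_{k+t} h_{n-1-m-t} s_m`, with coefficients `k+2t+m+1-n = (m+t) + (k+t+1-n)`.
-/

open MvPolynomial Finset

/-- The polynomial ring `Λ[s_0, s_1, …]` over (the `N`-variable truncation of) the ring of
symmetric functions over `ℚ`, with countably many commuting indeterminates `s_j`. -/
noncomputable abbrev LamS (N : ℕ) : Type := MvPolynomial ℕ (MvPolynomial (Fin N) ℚ)

/-- the complete homogeneous symmetric function `h_k`, viewed in `Λ[s]`. -/
noncomputable def hh (N k : ℕ) : LamS N := MvPolynomial.C (hsymm (Fin N) ℚ k)

/-- the power sum `p_m`, viewed in `Λ[s]`. -/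
noncomputable def ppw (N m : ℕ) : LamS N := MvPolynomial.C (psum (Fin N) ℚ m)

/-- the formal variable `s_j` (a single strand with `j` dots). -/
noncomputable def s (N j : ℕ) : LamS N := MvPolynomial.X j

namespace MvPolynomial

variable {σ R : Type*} [Fintype σ] [DecidableEq σ] [CommSemiring R]

theorem sum_range_X_pow_mul_hsymm (i : σ) (m : ℕ) :
    ∑ u ∈ range m, X i ^ (m - u) * hsymm σ R u
      = ∑ t : Sym σ m, (t : Multiset σ).count i • ((t : Multiset σ).map X).prod := by
  induction m with
  | zero => simp [Sym.eq_nil_of_card_zero]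
  | succ m ih =>
    calc ∑ u ∈ range (m + 1), X i ^ (m + 1 - u) * hsymm σ R u
        = X i * (∑ u ∈ range m, X i ^ (m - u) * hsymm σ R u + hsymm σ R m) := by
          rw [Finset.sum_range_succ, Nat.add_sub_cancel_left, pow_one, mul_add, Finset.mul_sum]
          congr 1
          refine Finset.sum_congr rfl fun u hu => ?_
          rw [Nat.sub_add_comm (mem_range.mp hu).le, pow_succ', mul_assoc]
      _ = ∑ t : Sym σ m, ((i ::ₛ t : Sym σ (m + 1)) : Multiset σ).count i •
            (((i ::ₛ t : Sym σ (m + 1)) : Multiset σ).map X).prod := by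
          rw [ih, hsymm, ← Finset.sum_add_distrib, Finset.mul_sum]
          simp only [Sym.val_eq_coe]
          refine Finset.sum_congr rfl fun t _ => ?_
          rw [Sym.coe_cons, Multiset.count_cons_self, Multiset.map_cons,
            Multiset.prod_cons, succ_nsmul, mul_add, mul_smul_comm]
      _ = ∑ t : Sym σ (m + 1), (t : Multiset σ).count i • ((t : Multiset σ).map X).prod := by
          refine Finset.sum_of_injOn (Sym.cons i) (fun t _ t' _ => (Sym.cons_inj_right i t t').mp)
            (fun _ _ => Finset.mem_coe.mpr (mem_univ _)) (fun t _ ht => ?_) (fun _ _ => rfl)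
          have hi : i ∉ t := fun hi => ht ⟨t.erase i hi, mem_univ _, Sym.cons_erase hi⟩
          rw [Multiset.count_eq_zero_of_notMem (Sym.mem_coe.not.mpr hi), zero_smul]

theorem sum_range_psum_mul_hsymm (m : ℕ) :
    ∑ u ∈ range m, psum σ R (m - u) * hsymm σ R u = m • hsymm σ R m := by
  simp only [psum, Finset.sum_mul]
  rw [Finset.sum_comm]
  simp only [sum_range_X_pow_mul_hsymm]
  rw [Finset.sum_comm, hsymm, Finset.smul_sum]
  simp only [Sym.val_eq_coe]
  refine Finset.sum_congr rfl fun t _ => ?_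
  rw [← Finset.sum_smul, Multiset.sum_count_eq_card (fun a _ => mem_univ a), Sym.card_coe]

end MvPolynomial

section Reindex

variable {M : Type*} [AddCommMonoid M]

theorem Finset.sum_Icc_sum_range_pred_comm (f : ℕ → ℕ → M) (a : ℕ) :
    ∑ t ∈ Icc 1 a, ∑ v ∈ range (t - 1), f t v
      = ∑ t ∈ Icc 1 a, ∑ u ∈ range (a - t), f (a - u) (t - 1) := by
  rw [Finset.sum_sigma', Finset.sum_sigma']
  refine Finset.sum_nbij' (fun x => ⟨x.2 + 1, a - x.1⟩) (fun y => ⟨a - y.2, y.1 - 1⟩)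
    ?_ ?_ ?_ ?_ ?_ <;> rintro ⟨t, v⟩ htv <;>
    simp only [mem_sigma, mem_Icc, mem_range, Sigma.mk.injEq, heq_eq_eq] at htv ⊢
  all_goals first | omega | (congr 1; omega)

theorem Finset.sum_Icc_sum_range_pred_eq_sum_range_sum_Icc (f : ℕ → ℕ → M) (n : ℕ) :
    ∑ i ∈ Icc 2 n, ∑ m ∈ range (i - 1), f i m
      = ∑ m ∈ range (n - 1), ∑ t ∈ Icc 1 (n - 1 - m), f (m + t + 1) m := by
  rw [Finset.sum_sigma', Finset.sum_sigma']
  refine Finset.sum_nbij' (fun x => ⟨x.2, x.1 - 1 - x.2⟩) (fun y => ⟨y.1 + y.2 + 1, y.1⟩)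
    ?_ ?_ ?_ ?_ ?_ <;> rintro ⟨i, m⟩ him <;>
    simp only [mem_sigma, mem_Icc, mem_range, Sigma.mk.injEq, heq_eq_eq, and_true, true_and]
      at him ⊢
  all_goals first | omega | (congr 1; omega)

theorem Finset.sum_Icc_sum_range_sub_eq_sum_range_sum_Icc (f : ℕ → ℕ → M) (n : ℕ) :
    ∑ i ∈ Icc 2 n, ∑ m ∈ range (n - i + 1), f i m
      = ∑ m ∈ range (n - 1), ∑ t ∈ Icc 1 (n - 1 - m), f (t + 1) m := by
  rw [Finset.sum_sigma', Finset.sum_sigma']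
  refine Finset.sum_nbij' (fun x => ⟨x.2, x.1 - 1⟩) (fun y => ⟨y.2 + 1, y.1⟩)
    ?_ ?_ ?_ ?_ ?_ <;> rintro ⟨i, m⟩ him <;>
    simp only [mem_sigma, mem_Icc, mem_range, Sigma.mk.injEq, heq_eq_eq, and_true, true_and]
      at him ⊢
  all_goals first | omega | (congr 1; omega)

end Reindex

section NewtonSequences

variable {A : Type*} [CommRing A] {h p : ℕ → A}

theorem sum_range_mul_add_eq_of_newton
    (newton : ∀ m, ∑ u ∈ range m, p (m - u) * h u = m • h m) (k : ℕ) {t : ℕ} (ht : 1 ≤ t) :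
    ∑ j ∈ range (k + 1), h (k - j) * p (t + j)
      = (k + t) • h (k + t) - ∑ v ∈ range (t - 1), p (t - 1 - v) * h (k + 1 + v) := by
  rw [← newton, show k + t = k + 1 + (t - 1) by omega,
    Finset.sum_range_add _ (k + 1) (t - 1)]
  simp only [Nat.add_sub_add_left, add_sub_cancel_right]
  rw [← Finset.sum_range_reflect]
  refine Finset.sum_congr rfl fun j hj => ?_
  rw [mem_range] at hj
  rw [mul_comm]
  congr 2 <;> omega

theorem sum_range_sum_Icc_mul_eq_of_newton
    (newton : ∀ m, ∑ u ∈ range m, p (m - u) * h u = m • h m) (a k : ℕ) :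
    ∑ j ∈ range (k + 1), ∑ l ∈ Icc 1 a, h (k - j) * h (a - l) * p (l + j)
      = ∑ t ∈ Icc 1 a, ((k : ℤ) + 2 * t - a) • (h (k + t) * h (a - t)) := by
  have hswap : ∑ t ∈ Icc 1 a, ∑ v ∈ range (t - 1), h (a - t) * (p (t - 1 - v) * h (k + 1 + v))
      = ∑ t ∈ Icc 1 a, ∑ u ∈ range (a - t), h (k + t) * (p (a - t - u) * h u) := by
    rw [Finset.sum_Icc_sum_range_pred_comm]
    refine Finset.sum_congr rfl fun t ht => Finset.sum_congr rfl fun u hu => ?_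
    rw [mem_Icc] at ht
    rw [mem_range] at hu
    rw [show a - (a - u) = u by omega, show a - u - 1 - (t - 1) = a - t - u by omega,
      show k + 1 + (t - 1) = k + t by omega]
    ring
  calc ∑ j ∈ range (k + 1), ∑ l ∈ Icc 1 a, h (k - j) * h (a - l) * p (l + j)
      = ∑ t ∈ Icc 1 a, h (a - t) * ∑ j ∈ range (k + 1), h (k - j) * p (t + j) := by
        rw [Finset.sum_comm]
        refine Finset.sum_congr rfl fun t _ => ?_
        rw [Finset.mul_sum]
        exact Finset.sum_congr rfl fun j _ => by ring
    _ = ∑ t ∈ Icc 1 a, ((k + t) • (h (k + t) * h (a - t))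
          - ∑ v ∈ range (t - 1), h (a - t) * (p (t - 1 - v) * h (k + 1 + v))) := by
        refine Finset.sum_congr rfl fun t ht => ?_
        rw [sum_range_mul_add_eq_of_newton newton k (mem_Icc.mp ht).1, mul_sub, Finset.mul_sum,
          mul_smul_comm, mul_comm (h (a - t))]
    _ = ∑ t ∈ Icc 1 a, ((k + t) • (h (k + t) * h (a - t))
          - h (k + t) * ∑ u ∈ range (a - t), p (a - t - u) * h u) := by
        simp only [Finset.sum_sub_distrib, hswap, Finset.mul_sum]
    _ = ∑ t ∈ Icc 1 a, ((k : ℤ) + 2 * t - a) • (h (k + t) * h (a - t)) := by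
        refine Finset.sum_congr rfl fun t ht => ?_
        rw [newton, mul_smul_comm, ← natCast_zsmul, ← natCast_zsmul, ← sub_smul]
        congr 1
        push_cast [(mem_Icc.mp ht).2]
        ring

/-- The common normal form of (B), (D) and the part of (C) not in (A). -/
def triangleSum (h s : ℕ → A) (n k : ℕ) (c : ℕ → ℕ → ℤ) : A :=
  ∑ m ∈ range (n - 1), ∑ t ∈ Icc 1 (n - 1 - m), c m t • (h (k + t) * h (n - 1 - m - t) * s m)

theorem triangleSum_add (h s : ℕ → A) (n k : ℕ) (c c' : ℕ → ℕ → ℤ) :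
    triangleSum h s n k c + triangleSum h s n k c' = triangleSum h s n k (c + c') := by
  simp only [triangleSum, ← Finset.sum_add_distrib, ← add_smul, Pi.add_apply]

theorem sum_range_sum_Icc_sum_Icc_mul_eq_triangleSum
    (newton : ∀ m, ∑ u ∈ range m, p (m - u) * h u = m • h m) (s : ℕ → A) (n k : ℕ) :
    ∑ j ∈ range (k + 1), ∑ i ∈ Icc 1 (n - 1), ∑ l ∈ Icc 1 (n - i),
        h (k - j) * h (n - l - i) * p (l + j) * s (i - 1)
      = triangleSum h s n k (fun m t => k + 2 * t + m + 1 - n) := by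
  rw [Finset.sum_comm, show Icc 1 (n - 1) = Ico 1 n by ext; simp only [mem_Icc, mem_Ico]; omega,
    Finset.sum_Ico_eq_sum_range, triangleSum]
  refine Finset.sum_congr rfl fun m hm => ?_
  rw [mem_range] at hm
  have hl : ∀ l, n - l - (1 + m) = n - 1 - m - l := fun l => by omega
  simp only [show n - (1 + m) = n - 1 - m by omega, hl, Nat.add_sub_cancel_left, ← Finset.sum_mul]
  rw [sum_range_sum_Icc_mul_eq_of_newton newton, Finset.sum_mul]
  refine Finset.sum_congr rfl fun t _ => ?_
  rw [smul_mul_assoc]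
  congr 1
  push_cast [Nat.sub_sub, show 1 + m ≤ n by omega]
  ring

theorem sum_Icc_nsmul_mul_sum_range_pred_eq_triangleSum (h s : ℕ → A) (n k : ℕ) :
    ∑ i ∈ Icc 2 n, (i - 1) • (h (n - i) * ∑ j ∈ range (i - 1), h (k + i - 1 - j) * s j)
      = triangleSum h s n k (fun m t => (m + t : ℕ)) := by
  simp only [Finset.mul_sum, Finset.smul_sum]
  rw [Finset.sum_Icc_sum_range_pred_eq_sum_range_sum_Icc, triangleSum]
  refine Finset.sum_congr rfl fun m hm => Finset.sum_congr rfl fun t ht => ?_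
  rw [mem_range] at hm
  rw [mem_Icc] at ht
  rw [natCast_zsmul, show m + t + 1 - 1 = m + t by omega,
    show n - (m + t + 1) = n - 1 - m - t by omega, show k + (m + t + 1) - 1 - m = k + t by omega]
  ring_nf

theorem sum_Icc_zsmul_mul_sum_range_eq_triangleSum (h s : ℕ → A) (n k : ℕ) :
    ∑ i ∈ Icc 2 n,
        ((k : ℤ) + i - n) • (h (k + i - 1) * ∑ j ∈ range (n - i + 1), h (n - i - j) * s j)
      = triangleSum h s n k (fun _ t => k + t + 1 - n) := by
  simp only [Finset.mul_sum, Finset.smul_sum]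
  rw [Finset.sum_Icc_sum_range_sub_eq_sum_range_sum_Icc, triangleSum]
  refine Finset.sum_congr rfl fun m _ => Finset.sum_congr rfl fun t _ => ?_
  rw [show k + (t + 1) - 1 = k + t by omega, show n - (t + 1) - m = n - 1 - m - t by omega]
  push_cast
  ring_nf

theorem inductive_expansion_of_newton
    (newton : ∀ m, ∑ u ∈ range m, p (m - u) * h u = m • h m) (s : ℕ → A) (n k : ℕ) :
    ∑ j ∈ range (k + 1),
        ((∑ i ∈ Icc 2 n, (i - 1) • (h (k - j) * h (n - i) * s (i + j - 1))) +
          ∑ i ∈ Icc 1 (n - 1), ∑ l ∈ Icc 1 (n - i),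
            h (k - j) * h (n - l - i) * p (l + j) * s (i - 1))
      = ∑ i ∈ Icc 2 n,
          ((i - 1) • (h (n - i) * ∑ j ∈ range (k + i), h (k + i - 1 - j) * s j) +
            ((k : ℤ) + i - n) •
              (h (k + i - 1) * ∑ j ∈ range (n - i + 1), h (n - i - j) * s j)) := by
  have hsplitC : ∀ i ∈ Icc 2 n,
      (i - 1) • (h (n - i) * ∑ j ∈ range (k + i), h (k + i - 1 - j) * s j)
        = ∑ j ∈ range (k + 1), (i - 1) • (h (k - j) * h (n - i) * s (i + j - 1))
          + (i - 1) • (h (n - i) * ∑ j ∈ range (i - 1), h (k + i - 1 - j) * s j) := by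
    intro i hi
    rw [mem_Icc] at hi
    rw [show k + i = i - 1 + (k + 1) by omega, Finset.sum_range_add, mul_add, smul_add, add_comm,
      Finset.mul_sum, Finset.smul_sum]
    congr 1
    refine Finset.sum_congr rfl fun j _ => ?_
    rw [show i - 1 + (k + 1) - 1 - (i - 1 + j) = k - j by omega,
      show i - 1 + j = i + j - 1 by omega]
    ring_nf
  rw [Finset.sum_add_distrib, Finset.sum_add_distrib, Finset.sum_congr rfl hsplitC,
    Finset.sum_add_distrib, Finset.sum_comm (s := range (k + 1)), add_assoc,
    sum_range_sum_Icc_sum_Icc_mul_eq_triangleSum newton,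
    sum_Icc_nsmul_mul_sum_range_pred_eq_triangleSum, sum_Icc_zsmul_mul_sum_range_eq_triangleSum,
    triangleSum_add]
  congr 2
  funext m t
  simp only [Pi.add_apply]
  push_cast
  ring

end NewtonSequences

theorem sum_range_ppw_mul_hh (N m : ℕ) :
    ∑ u ∈ range m, ppw N (m - u) * hh N u = m • hh N m := by
  simp only [hh, ppw, ← map_mul, ← map_sum, MvPolynomial.sum_range_psum_mul_hsymm, map_nsmul]

theorem stmt10_general (n k : ℕ) (N : ℕ) :
    ∑ j ∈ range (k + 1),
        ((∑ i ∈ Finset.Icc 2 n,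
            (i - 1) • (hh N (k - j) * hh N (n - i) * s N (i + j - 1))) +
          ∑ i ∈ Finset.Icc 1 (n - 1), ∑ l ∈ Finset.Icc 1 (n - i),
            hh N (k - j) * hh N (n - l - i) * ppw N (l + j) * s N (i - 1))
      = ∑ i ∈ Finset.Icc 2 n,
          ((i - 1) • (hh N (n - i) * ∑ j ∈ range (k + i), hh N (k + i - 1 - j) * s N j) +
            ((k : ℤ) + (i : ℤ) - (n : ℤ)) •
              (hh N (k + i - 1) * ∑ j ∈ range (n - i + 1), hh N (n - i - j) * s N j)) :=
  inductive_expansion_of_newton (sum_range_ppw_mul_hh N) (s N) n k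

/-- for `n ≥ 1` and `k ≥ 0`,
`Σ_{j=0}^{k} [ Σ_{i=2}^{n} (i−1) h_{k−j} h_{n−i} s_{i+j−1}
              + Σ_{i=1}^{n−1} Σ_{ℓ=1}^{n−i} h_{k−j} h_{n−ℓ−i} p_{ℓ+j} s_{i−1} ]
 = Σ_{i=2}^{n} [ (i−1) h_{n−i} Σ_{j=0}^{k+i−1} h_{k+i−1−j} s_j
              + (k+i−n) h_{k+i−1} Σ_{j=0}^{n−i} h_{n−i−j} s_j ]`. -/
theorem stmt10 (n k : ℕ) (hn : 1 ≤ n) (N : ℕ) :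
    ∑ j ∈ range (k + 1),
        ((∑ i ∈ Finset.Icc 2 n,
            (i - 1) • (hh N (k - j) * hh N (n - i) * s N (i + j - 1))) +
          ∑ i ∈ Finset.Icc 1 (n - 1), ∑ l ∈ Finset.Icc 1 (n - i),
            hh N (k - j) * hh N (n - l - i) * ppw N (l + j) * s N (i - 1))
      = ∑ i ∈ Finset.Icc 2 n,
          ((i - 1) • (hh N (n - i) * ∑ j ∈ range (k + i), hh N (k + i - 1 - j) * s N j) +
            ((k : ℤ) + (i : ℤ) - (n : ℤ)) •
              (hh N (k + i - 1) * ∑ j ∈ range (n - i + 1), hh N (n - i - j) * s N j)) :=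
  stmt10_general n k N
end

section
/- Let n ≥ 4 and let λ be a partition contained in stair(n), with P(λ) the poset on {1,…,n} given by a ≺ b iff a ≤ λ_{n+1−b}. Then P(λ) avoids 2+1+1 (a two-element chain together with two elements incomparable to everything else and to each other) as an induced subposet if and only if every corner of the Young diagram of λ is a corner of the staircase shape stair(n−1) or of stair(n). -/
/-- Let `n ≥ 4` and `lam` a partition contained in `stair(n)`, and `P(lam)`
the poset on `{1,…,n}` with `a ≺ b` iff `a ≤ lam (n+1−b)`.  Then `P(lam)` contains an
induced subposet isomorphic to `2+1+1` (four distinct elements `x, y, u, v` whose only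
induced relation is `x ≺ y`) if and only if the Young diagram of `lam` has a corner
(an index `i` with `lam i > lam (i+1)`) that is a corner of neither `stair(n−1)` nor
`stair(n)`, i.e. with `lam i ≠ n − i` and `lam i ≠ n − 1 − i`.  Equivalently, `P(lam)`
avoids `2+1+1` iff every corner of `lam` is a corner of `stair(n−1)` or of `stair(n)`. -/
theorem stmt13 (n : ℕ) (hn : 4 ≤ n) (lam : ℕ → ℕ)
    (hstair : ∀ i ∈ Finset.Icc 1 n, lam i ≤ n - i)
    (hmono : ∀ i j, 1 ≤ i → i ≤ j → j ≤ n → lam j ≤ lam i) :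
    (∃ x ∈ Finset.Icc 1 n, ∃ y ∈ Finset.Icc 1 n, ∃ u ∈ Finset.Icc 1 n, ∃ v ∈ Finset.Icc 1 n,
      x ≠ y ∧ x ≠ u ∧ x ≠ v ∧ y ≠ u ∧ y ≠ v ∧ u ≠ v ∧
      x ≤ lam (n + 1 - y) ∧ ¬ y ≤ lam (n + 1 - x) ∧
      ¬ x ≤ lam (n + 1 - u) ∧ ¬ u ≤ lam (n + 1 - x) ∧
      ¬ x ≤ lam (n + 1 - v) ∧ ¬ v ≤ lam (n + 1 - x) ∧
      ¬ y ≤ lam (n + 1 - u) ∧ ¬ u ≤ lam (n + 1 - y) ∧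
      ¬ y ≤ lam (n + 1 - v) ∧ ¬ v ≤ lam (n + 1 - y) ∧
      ¬ u ≤ lam (n + 1 - v) ∧ ¬ v ≤ lam (n + 1 - u))
    ↔
    (∃ i ∈ Finset.Icc 1 (n - 1),
      lam (i + 1) < lam i ∧ lam i ≠ n - i ∧ lam i ≠ n - 1 - i) := by
  constructor
  · rintro ⟨x, hx, y, hy, u, hu, v, hv, hxy, hxu, hxv, hyu, hyv, huv,
      hxly, hylx, hxlu, hulx, hxlv, hvlx, hylu, huly, hylv, hvly, hulv, hvlu⟩
    simp only [Finset.mem_Icc] at hx hy hu hv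
    by_contra hR
    push_neg at hR
    simp only [Finset.mem_Icc] at hR
    -- hR : ∀ i, 1 ≤ i ∧ i ≤ n-1 → lam (i+1) < lam i → lam i ≠ n - i → lam i = n-1-i
    -- Key structural fact: if lam j = h with 1 ≤ h ≤ n - 2 (j ∈ [1,n]),
    -- then lam (n-1-h) ≥ h.
    have star : ∀ j, 1 ≤ j → j ≤ n → 1 ≤ lam j → lam j ≤ n - 2 →
        lam j ≤ lam (n - 1 - lam j) := by
      intro j hj1 hjn hl1 hl2
      set h := lam j with hh
      by_contra hcon
      push_neg at hcon
      set m := n - 1 - h with hm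
      have hm1 : 1 ≤ m := by omega
      have hmn : m ≤ n := by omega
      have hjm : j < m := by
        by_contra hjm
        push_neg at hjm
        have := hmono m j hm1 hjm hjn
        omega
      -- largest index i in [j, m] with h ≤ lam i
      set S : Finset ℕ := (Finset.Icc j m).filter (fun t => h ≤ lam t) with hS
      have hjS : j ∈ S := by
        simp [hS, Finset.mem_Icc]
        omega
      have hSne : S.Nonempty := ⟨j, hjS⟩
      set i := S.max' hSne with hi
      have hiS : i ∈ S := S.max'_mem hSne
      simp only [hS, Finset.mem_filter, Finset.mem_Icc] at hiS
      obtain ⟨⟨hji, him⟩, hhi⟩ := hiS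
      have hilt : i < m := by
        rcases lt_or_eq_of_le him with h' | h'
        · exact h'
        · rw [h'] at hhi; omega
      have hnext : lam (i + 1) < h := by
        by_contra hnext
        push_neg at hnext
        have : i + 1 ∈ S := by
          simp [hS, Finset.mem_Icc]
          omega
        have := S.le_max' (i + 1) this
        omega
      have hieq : lam i = h := by
        have := hmono j i hj1 hji (by omega)
        omega
      have := hR i ⟨by omega, by omega⟩ (by omega) (by omega)
      omega
    -- Now derive a contradiction from the 2+1+1 pattern.
    have hyn : n + 1 - y ≥ 1 := by omega
    have hyn' : n + 1 - y ≤ n := by omega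
    set h := lam (n + 1 - y) with hh
    have hxh : x ≤ h := hxly
    have hhb : h ≤ n - (n + 1 - y) := hstair _ (Finset.mem_Icc.mpr ⟨hyn, hyn'⟩)
    have hyh : h + 1 ≤ y := by omega
    have huh : h < u := by omega
    have hvh : h < v := by omega
    -- each of u, v must equal h + 1
    have key : ∀ a, 1 ≤ a → a ≤ n → h < a → ¬ x ≤ lam (n + 1 - a) → a = h + 1 := by
      intro a ha1 han hha hxa
      by_contra hcon
      have ha2 : h + 2 ≤ a := by omega
      have hh2 : h ≤ n - 2 := by omega
      have hstar := star (n + 1 - y) hyn hyn' (by omega) (by rw [← hh]; omega)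
      rw [← hh] at hstar
      have hmo := hmono (n + 1 - a) (n - 1 - h) (by omega) (by omega) (by omega)
      omega
    have hu1 := key u hu.1 hu.2 huh hxlu
    have hv1 := key v hv.1 hv.2 hvh hxlv
    exact huv (by omega)
  · rintro ⟨i, hi, hdrop, hne1, hne2⟩
    simp only [Finset.mem_Icc] at hi
    obtain ⟨hi1, hi2⟩ := hi
    set c := lam i with hc
    have hc1 : 1 ≤ c := by omega
    have hcn : c ≤ n - i := hstair i (Finset.mem_Icc.mpr ⟨hi1, by omega⟩)
    have hcb : c ≤ n - 2 - i := by omega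
    -- the four elements
    refine ⟨c, ?_, n + 1 - i, ?_, c + 1, ?_, n - i, ?_, ?_⟩
    · simp [Finset.mem_Icc]; omega
    · simp [Finset.mem_Icc]; omega
    · simp [Finset.mem_Icc]; omega
    · simp [Finset.mem_Icc]; omega
    have e1 : n + 1 - (n + 1 - i) = i := by omega
    have e2 : n + 1 - (c + 1) = n - c := by omega
    have e3 : n + 1 - (n - i) = i + 1 := by omega
    rw [e1, e2, e3]
    have A1 : lam (n + 1 - c) ≤ c - 1 := by
      have := hstair (n + 1 - c) (Finset.mem_Icc.mpr ⟨by omega, by omega⟩)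
      omega
    have A2 : lam (n - c) ≤ lam (i + 1) := hmono (i + 1) (n - c) (by omega) (by omega) (by omega)
    refine ⟨by omega, by omega, by omega, by omega, by omega, by omega,
      le_refl c, by omega, by omega, by omega, by omega, by omega,
      by omega, by omega, by omega, by omega, by omega, by omega⟩
end

section
/- Let n ≥ 2 and k ≥ 0 be integers. In the ring of symmetric functions over ℚ, the expression Σ_{i=2}^{n} (i−1) h_{n−i} (k+i) h_{k+i} + Σ_{i=2}^{n} (k+i−n) h_{k+i−1} (n−i+1) h_{n−i+1} is h-positive, i.e., it is a nonnegative linear combination of products h_a h_b; in fact it equals Σ_{i=2}^{n} (i−1)(k+i) h_{n−i} h_{k+i} + Σ_{i=2}^{n} (k+i−n)(n−i+1) h_{k+i−1} h_{n−i+1}, and after cancellation of the terms with negative coefficients (pairing each i₁ with k+i₁−n < 0 against i₂ = n−k−i₁+1) all coefficients are nonnegative. -/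
open MvPolynomial Finset

/-- Coefficient function for statement 15. -/
def cfun (n k : ℕ) (a b : ℕ) : ℕ :=
  if a + b = n + k then
    (if a + 2 ≤ n ∧ a ≤ k then (n - 1 - a) * (n + k - a) else 0) +
    (if n ≤ a + 1 ∧ k + 1 ≤ a ∧ a + 1 ≤ k + n then (a + 1 - n) * (n + k - a) else 0)
  else 0

lemma stmt15_helper (n k : ℕ) (hn : 2 ≤ n) {M : Type*} [AddCommGroup M] (P : ℕ → ℕ → M) :
    (∑ i ∈ Finset.Icc 2 n, ((i - 1) * (k + i)) • P (n - i) (k + i)) +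
      ∑ i ∈ Finset.Icc 2 n,
        (((k : ℤ) + (i : ℤ) - (n : ℤ)) * ((n : ℤ) - (i : ℤ) + 1)) • P (k + i - 1) (n - i + 1)
    = ∑ a ∈ range (n + k + 1), ∑ b ∈ range (n + k + 1), cfun n k a b • P a b := by
  classical
  have hS1 : (∑ i ∈ Finset.Icc 2 n, ((i - 1) * (k + i)) • P (n - i) (k + i))
      = ∑ a ∈ range (n + k + 1),
          (if a + 2 ≤ n then ((n : ℤ) - a - 1) * ((n : ℤ) + k - a) else 0) • P a (n + k - a) := by
    simp only [ite_smul, zero_smul]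
    rw [← Finset.sum_filter]
    have hfilter : (range (n + k + 1)).filter (fun a => a + 2 ≤ n) = range (n - 1) := by
      ext a; simp only [mem_filter, mem_range]; omega
    rw [hfilter]
    refine Finset.sum_bij' (fun i _ => n - i) (fun a _ => n - a) ?_ ?_ ?_ ?_ ?_
    · intro i hi; simp only [mem_Icc] at hi; simp only [mem_range]; omega
    · intro a ha; simp only [mem_range] at ha; simp only [mem_Icc]; omega
    · intro i hi; simp only [mem_Icc] at hi; omega
    · intro a ha; simp only [mem_range] at ha; omega
    · intro i hi
      simp only [mem_Icc] at hi
      have h2 : n + k - (n - i) = k + i := by omega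
      rw [h2, ← natCast_zsmul]
      congr 1
      have e1 : ((n - i : ℕ) : ℤ) = (n : ℤ) - i := by omega
      have e2 : ((i - 1 : ℕ) : ℤ) = (i : ℤ) - 1 := by omega
      push_cast [e1, e2]
      ring
  have hS2 : (∑ i ∈ Finset.Icc 2 n,
        (((k : ℤ) + (i : ℤ) - (n : ℤ)) * ((n : ℤ) - (i : ℤ) + 1)) • P (k + i - 1) (n - i + 1))
      = ∑ a ∈ range (n + k + 1),
          (if k + 1 ≤ a ∧ a + 1 ≤ k + n then ((a : ℤ) + 1 - n) * ((n : ℤ) + k - a) else 0)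
            • P a (n + k - a) := by
    simp only [ite_smul, zero_smul]
    rw [← Finset.sum_filter]
    have hfilter : (range (n + k + 1)).filter (fun a => k + 1 ≤ a ∧ a + 1 ≤ k + n)
        = Finset.Icc (k + 1) (k + n - 1) := by
      ext a; simp only [mem_filter, mem_range, mem_Icc]; omega
    rw [hfilter]
    refine Finset.sum_bij' (fun i _ => k + i - 1) (fun a _ => a + 1 - k) ?_ ?_ ?_ ?_ ?_
    · intro i hi; simp only [mem_Icc] at hi; simp only [mem_Icc]; omega
    · intro a ha; simp only [mem_Icc] at ha; simp only [mem_Icc]; omega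
    · intro i hi; simp only [mem_Icc] at hi; omega
    · intro a ha; simp only [mem_Icc] at ha; omega
    · intro i hi
      simp only [mem_Icc] at hi
      have h2 : n + k - (k + i - 1) = n - i + 1 := by omega
      rw [h2]
      congr 1
      have e1 : ((k + i - 1 : ℕ) : ℤ) = (k : ℤ) + i - 1 := by omega
      rw [e1]
      ring
  have hRHS : ∀ a ∈ range (n + k + 1),
      (∑ b ∈ range (n + k + 1), cfun n k a b • P a b)
        = cfun n k a (n + k - a) • P a (n + k - a) := by
    intro a ha
    simp only [mem_range] at ha
    refine Finset.sum_eq_single_of_mem (n + k - a) (by simp only [mem_range]; omega) ?_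
    intro b hb hne
    have hb' : ¬ (a + b = n + k) := by omega
    simp [cfun, hb']
  rw [hS1, hS2, ← Finset.sum_add_distrib, Finset.sum_congr rfl hRHS]
  refine Finset.sum_congr rfl ?_
  intro a ha
  simp only [mem_range] at ha
  rw [← add_smul, ← natCast_zsmul]
  have hs : (if a + 2 ≤ n then ((n : ℤ) - a - 1) * ((n : ℤ) + k - a) else 0) +
      (if k + 1 ≤ a ∧ a + 1 ≤ k + n then ((a : ℤ) + 1 - n) * ((n : ℤ) + k - a) else 0)
      = ((cfun n k a (n + k - a) : ℕ) : ℤ) := by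
    simp only [cfun]
    rw [if_pos (show a + (n + k - a) = n + k by omega)]
    by_cases h1 : a + 2 ≤ n
    · by_cases h2 : k + 1 ≤ a
      · rw [if_pos h1, if_pos ⟨h2, by omega⟩, if_neg (by omega), if_neg (by omega)]
        push_cast
        ring
      · rw [if_pos h1, if_neg (by omega), if_pos ⟨h1, by omega⟩, if_neg (by omega)]
        have e1 : ((n - 1 - a : ℕ) : ℤ) = (n : ℤ) - 1 - a := by omega
        have e2 : ((n + k - a : ℕ) : ℤ) = (n : ℤ) + k - a := by omega
        push_cast [e1, e2]
        ring
    · by_cases h2 : k + 1 ≤ a ∧ a + 1 ≤ k + n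
      · rw [if_neg h1, if_pos h2, if_neg (by omega), if_pos ⟨by omega, h2⟩]
        have e2 : ((n + k - a : ℕ) : ℤ) = (n : ℤ) + k - a := by omega
        have e3 : ((a + 1 - n : ℕ) : ℤ) = (a : ℤ) + 1 - n := by omega
        push_cast [e2, e3]
        ring
      · rw [if_neg h1, if_neg h2, if_neg (by omega), if_neg (by omega)]
        simp
  rw [hs]

/-- For `n ≥ 2`, `k ≥ 0`, the symmetric function
`Σ_{i=2}^{n} (i−1)(k+i) h_{n−i} h_{k+i} + Σ_{i=2}^{n} (k+i−n)(n−i+1) h_{k+i−1} h_{n−i+1}`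
is `h`-positive: it is a nonnegative (natural number) linear combination of products
`h_a h_b`. -/
theorem stmt15 (n k : ℕ) (hn : 2 ≤ n) (N : ℕ) :
    ∃ c : ℕ → ℕ → ℕ,
      (∑ i ∈ Finset.Icc 2 n,
          ((i - 1) * (k + i)) • (hsymm (Fin N) ℚ (n - i) * hsymm (Fin N) ℚ (k + i))) +
        ∑ i ∈ Finset.Icc 2 n,
          (((k : ℤ) + (i : ℤ) - (n : ℤ)) * ((n : ℤ) - (i : ℤ) + 1)) •
            (hsymm (Fin N) ℚ (k + i - 1) * hsymm (Fin N) ℚ (n - i + 1))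
      = ∑ a ∈ range (n + k + 1), ∑ b ∈ range (n + k + 1),
          c a b • (hsymm (Fin N) ℚ a * hsymm (Fin N) ℚ b) := by
  exact ⟨cfun n k, stmt15_helper n k hn (fun a b => hsymm (Fin N) ℚ a * hsymm (Fin N) ℚ b)⟩
end
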